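/- Under the same setup (k ≥ 1 fixed, f > 0, g_k(h;p) = p^(k-h) f(h)/Z_k(p)), the derivative with respect to p of the subjective mean E_{g_k(·;p)}[H] = ∑_{h=0}^{k-1} h·g_k(h;p) equals −(1/p)·Var_{g_k(·;p)}(H), where Var_{g_k}(H) = ∑_h h² g_k(h;p) − (∑_h h g_k(h;p))². -/

import Mathlib

/-!
The belief `g_k(·; q)` is the power tilt `q ^ (k - h) f h / Z(q)` of `f`. Since
`q · d/dq q ^ a = a q ^ a`, the quotient rule gives `q · d/dq E[X] = Cov(X, a)` for every
statistic `X` of any power tilt with exponents `a`. For `X = H` and `a = k - H` this covariance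
is `-Var(H)`.
-/

open Finset

section PowerTilting

variable {ι : Type*} (s : Finset ι) (a : ι → ℕ) (c : ι → ℝ)

noncomputable def tiltedWeight (q : ℝ) (i : ι) : ℝ := q ^ a i * c i / ∑ j ∈ s, q ^ a j * c j

variable {s a c}

theorem sum_tiltedWeight {q : ℝ} (hZ : ∑ j ∈ s, q ^ a j * c j ≠ 0) :
    ∑ i ∈ s, tiltedWeight s a c q i = 1 := by
  simp only [tiltedWeight, ← sum_div, div_self hZ]

theorem sum_mul_tiltedWeight (X : ι → ℝ) (q : ℝ) :
    ∑ i ∈ s, X i * tiltedWeight s a c q i =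
      (∑ i ∈ s, X i * (q ^ a i * c i)) / ∑ j ∈ s, q ^ a j * c j := by
  simp only [tiltedWeight, mul_div_assoc, sum_div]

theorem hasDerivAt_pow_of_ne_zero (n : ℕ) {p : ℝ} (hp : p ≠ 0) :
    HasDerivAt (fun q : ℝ => q ^ n) (n * p ^ n / p) p := by
  refine (hasDerivAt_pow n p).congr_deriv ?_
  rcases n with _ | n
  · simp
  · rw [pow_succ]; field_simp; simp

theorem hasDerivAt_sum_mul_pow_mul (X : ι → ℝ) {p : ℝ} (hp : p ≠ 0) :
    HasDerivAt (fun q => ∑ i ∈ s, X i * (q ^ a i * c i))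
      ((∑ i ∈ s, X i * a i * (p ^ a i * c i)) / p) p := by
  rw [sum_div]
  refine HasDerivAt.fun_sum fun i _ => ?_
  exact (((hasDerivAt_pow_of_ne_zero (a i) hp).mul_const (c i)).const_mul (X i)).congr_deriv
    (by ring)

theorem hasDerivAt_sum_mul_tiltedWeight (X : ι → ℝ) {p : ℝ} (hp : p ≠ 0)
    (hZ : ∑ j ∈ s, p ^ a j * c j ≠ 0) :
    HasDerivAt (fun q => ∑ i ∈ s, X i * tiltedWeight s a c q i)
      ((∑ i ∈ s, X i * a i * tiltedWeight s a c p i -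
        (∑ i ∈ s, X i * tiltedWeight s a c p i) * ∑ i ∈ s, a i * tiltedWeight s a c p i) / p) p := by
  have hZ' : HasDerivAt (fun q => ∑ i ∈ s, q ^ a i * c i)
      ((∑ i ∈ s, a i * (p ^ a i * c i)) / p) p := by
    simpa using hasDerivAt_sum_mul_pow_mul (s := s) (a := a) (c := c) (fun _ => 1) hp
  simp only [sum_mul_tiltedWeight]
  refine ((hasDerivAt_sum_mul_pow_mul X hp).div hZ' hZ).congr_deriv ?_
  field_simp

end PowerTilting

theorem covariance_eq_neg_variance_of_eq_const_sub {ι : Type*} {s : Finset ι} {w X Y : ι → ℝ}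
    (hw : ∑ i ∈ s, w i = 1) {K : ℝ} (hY : ∀ i ∈ s, Y i = K - X i) :
    ∑ i ∈ s, X i * Y i * w i - (∑ i ∈ s, X i * w i) * ∑ i ∈ s, Y i * w i =
      -(∑ i ∈ s, X i ^ 2 * w i - (∑ i ∈ s, X i * w i) ^ 2) := by
  have hXY : ∑ i ∈ s, X i * Y i * w i = ∑ i ∈ s, X i * (K - X i) * w i :=
    sum_congr rfl fun i hi => by rw [hY i hi]
  have hY' : ∑ i ∈ s, Y i * w i = ∑ i ∈ s, (K - X i) * w i :=
    sum_congr rfl fun i hi => by rw [hY i hi]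
  rw [hXY, hY']
  simp only [sq, mul_sub, sub_mul, sum_sub_distrib, mul_comm (X _) K, mul_assoc, ← mul_sum, hw]
  ring

/-- strategic sensitivity. The derivative of the subjective mean
in `p` equals minus the belief variance divided by `p`. -/
theorem strategic_sensitivity
    (f : ℕ → ℝ) (hf : ∀ n, 0 < f n) (k : ℕ) (hk : 1 ≤ k)
    (p : ℝ) (hp : 0 < p)
    (g : ℝ → ℕ → ℝ)
    (hg : ∀ q : ℝ, ∀ j : ℕ,
      g q j = q ^ (k - j) * f j / ∑ l ∈ Finset.range k, q ^ (k - l) * f l)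
    (E : ℝ → ℝ) (hE : ∀ q : ℝ, E q = ∑ j ∈ Finset.range k, (j : ℝ) * g q j)
    (V : ℝ → ℝ)
    (hV : ∀ q : ℝ,
      V q = ∑ j ∈ Finset.range k, (j : ℝ) ^ 2 * g q j - (E q) ^ 2) :
    HasDerivAt E (-(1 / p) * V p) p := by
  obtain rfl : g = tiltedWeight (range k) (k - ·) f := funext fun q => funext (hg q)
  obtain rfl : E = fun q => ∑ j ∈ range k, (j : ℝ) * tiltedWeight (range k) (k - ·) f q j :=
    funext hE
  have hZ : ∑ l ∈ range k, p ^ (k - l) * f l ≠ 0 :=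
    (sum_pos (fun l _ => mul_pos (pow_pos hp _) (hf l)) (nonempty_range_iff.mpr (by omega))).ne'
  have hcast : ∀ j ∈ range k, ((k - j : ℕ) : ℝ) = k - j := fun j hj =>
    Nat.cast_sub (mem_range.mp hj).le
  refine (hasDerivAt_sum_mul_tiltedWeight (fun j : ℕ => (j : ℝ)) hp.ne' hZ).congr_deriv ?_
  rw [covariance_eq_neg_variance_of_eq_const_sub (sum_tiltedWeight hZ) hcast, hV]
  ring
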